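/- For every 1 ≤ k ≤ dim E there exists a constant c > 1 such that for all k-dimensional subspaces U, V ⊆ E one has (1/c) ‖P_U − P_V‖ ≤ δ(U,V) ≤ c ‖P_U − P_V‖. -/

import Mathlib

/-!
Writing `P_{V⊥} = 1 - P_V`, the gap is `δ(U,V) = ‖P_{V⊥} P_U‖`. Since `P_{V⊥} P_V = 0`, this is
`‖P_{V⊥} (P_U - P_V)‖ ≤ ‖P_U - P_V‖`. Conversely `P_U - P_V = P_{V⊥} P_U - (P_{U⊥} P_V)*`, so
`‖P_U - P_V‖ ≤ δ(U,V) + δ(V,U)`. For subspaces of equal dimension the gap is symmetric up to a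
factor 2: if `δ(U,V) < 1/2`, then `P_V` restricted to `U` is injective, hence onto `V`, and
every `v ∈ V` lies within `δ(U,V) ‖u‖ ≤ 2 δ(U,V) ‖v‖` of `U`, where `u ∈ U` is a preimage of `v`;
otherwise `δ(V,U) ≤ 1 ≤ 2 δ(U,V)`. Hence `c = 3` works.
-/

open Module Submodule

noncomputable section

variable {E : Type*} [NormedAddCommGroup E] [InnerProductSpace ℝ E] [FiniteDimensional ℝ E]

/-- The orthogonal projection onto a subspace `U`, viewed as a continuous linear
endomorphism of `E`. -/
noncomputable def projCLM (U : Submodule ℝ E) : E →L[ℝ] E :=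
  U.subtypeL.comp (orthogonalProjection U)

/-- The gap `δ(U,V) := ‖P_U - P_V ∘ P_U‖` between two subspaces. -/
noncomputable def gap (U V : Submodule ℝ E) : ℝ :=
  ‖projCLM U - (projCLM V).comp (projCLM U)‖

lemma projCLM_eq_starProjection (U : Submodule ℝ E) : projCLM U = U.starProjection := rfl

lemma gap_eq_norm_starProjection_orthogonal_mul (U V : Submodule ℝ E) :
    gap U V = ‖Vᗮ.starProjection * U.starProjection‖ := by
  rw [gap, starProjection_orthogonal', sub_mul, one_mul, projCLM_eq_starProjection,
    projCLM_eq_starProjection, ContinuousLinearMap.mul_def]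

lemma gap_le_one (U V : Submodule ℝ E) : gap U V ≤ 1 := by
  rw [gap_eq_norm_starProjection_orthogonal_mul]
  exact (norm_mul_le _ _).trans <|
    mul_le_one₀ (starProjection_norm_le _) (norm_nonneg _) (starProjection_norm_le _)

lemma gap_le_norm_projCLM_sub (U V : Submodule ℝ E) : gap U V ≤ ‖projCLM U - projCLM V‖ := by
  have hV : Vᗮ.starProjection * V.starProjection = 0 := by
    rw [starProjection_orthogonal', sub_mul, one_mul,
      V.isIdempotentElem_starProjection.eq, sub_self]
  rw [gap_eq_norm_starProjection_orthogonal_mul, projCLM_eq_starProjection,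
    projCLM_eq_starProjection]
  calc _ = ‖Vᗮ.starProjection * (U.starProjection - V.starProjection)‖ := by
        rw [mul_sub, hV, sub_zero]
    _ ≤ ‖Vᗮ.starProjection‖ * ‖U.starProjection - V.starProjection‖ := norm_mul_le _ _
    _ ≤ 1 * ‖U.starProjection - V.starProjection‖ := by
        gcongr; exact starProjection_norm_le _
    _ = _ := one_mul _

lemma norm_projCLM_sub_le_gap_add_gap (U V : Submodule ℝ E) :
    ‖projCLM U - projCLM V‖ ≤ gap U V + gap V U := by
  have hsplit : U.starProjection - V.starProjection =
      Vᗮ.starProjection * U.starProjection - star (Uᗮ.starProjection * V.starProjection) := by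
    rw [star_mul, (isSelfAdjoint_starProjection V).star_eq,
      (isSelfAdjoint_starProjection Uᗮ).star_eq]
    simp only [starProjection_orthogonal', sub_mul, mul_sub, one_mul, mul_one]
    abel
  rw [gap_eq_norm_starProjection_orthogonal_mul, gap_eq_norm_starProjection_orthogonal_mul,
    projCLM_eq_starProjection, projCLM_eq_starProjection, hsplit,
    ← norm_star (Uᗮ.starProjection * V.starProjection)]
  exact norm_sub_le _ _

lemma norm_starProjection_orthogonal_le_gap {U : Submodule ℝ E} (V : Submodule ℝ E) {u : E}
    (hu : u ∈ U) : ‖Vᗮ.starProjection u‖ ≤ gap U V * ‖u‖ := by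
  rw [gap_eq_norm_starProjection_orthogonal_mul]
  simpa [starProjection_eq_self_iff.mpr hu] using
    (Vᗮ.starProjection * U.starProjection).le_opNorm u

lemma gap_le_of_forall_norm_starProjection_orthogonal_le {U V : Submodule ℝ E} {C : ℝ}
    (hC : 0 ≤ C) (h : ∀ u ∈ U, ‖Vᗮ.starProjection u‖ ≤ C * ‖u‖) : gap U V ≤ C := by
  rw [gap_eq_norm_starProjection_orthogonal_mul]
  refine ContinuousLinearMap.opNorm_le_bound _ hC fun x => ?_
  calc ‖Vᗮ.starProjection (U.starProjection x)‖ ≤ C * ‖U.starProjection x‖ :=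
        h _ (U.starProjection_apply_mem x)
    _ ≤ C * ‖x‖ := by gcongr; exact U.norm_starProjection_apply_le x

lemma exists_mem_starProjection_eq_of_gap_lt_one {U V : Submodule ℝ E}
    (hUV : finrank ℝ U = finrank ℝ V) (hgap : gap U V < 1) {v : E} (hv : v ∈ V) :
    ∃ u ∈ U, V.starProjection u = v := by
  let f : U →ₗ[ℝ] V := (V.orthogonalProjectionOnto : E →ₗ[ℝ] V) ∘ₗ U.subtype
  have hinj : Function.Injective f := by
    rw [← LinearMap.ker_eq_bot, LinearMap.ker_eq_bot']
    intro u hu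
    have hu_le := norm_starProjection_orthogonal_le_gap V u.2
    rw [starProjection_orthogonal_val, show V.starProjection u = 0 from congrArg Subtype.val hu,
      sub_zero] at hu_le
    have : ‖(u : E)‖ = 0 := by nlinarith [norm_nonneg (u : E)]
    exact Subtype.ext (norm_eq_zero.mp this)
  obtain ⟨u, hu⟩ := (LinearMap.injective_iff_surjective_of_finrank_eq_finrank hUV).mp hinj ⟨v, hv⟩
  exact ⟨u, u.2, congrArg Subtype.val hu⟩

lemma gap_le_two_mul_gap {U V : Submodule ℝ E} (hUV : finrank ℝ U = finrank ℝ V) :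
    gap V U ≤ 2 * gap U V := by
  rcases le_or_gt (1 / 2) (gap U V) with hd | hd
  · linarith [gap_le_one V U]
  have hd0 : 0 ≤ gap U V := norm_nonneg _
  refine gap_le_of_forall_norm_starProjection_orthogonal_le (by positivity) fun v hv => ?_
  obtain ⟨u, hu, rfl⟩ := exists_mem_starProjection_eq_of_gap_lt_one hUV (by linarith) hv
  have hdist : ‖u - V.starProjection u‖ ≤ gap U V * ‖u‖ := by
    simpa using norm_starProjection_orthogonal_le_gap V hu
  have hu_le : ‖u‖ ≤ 2 * ‖V.starProjection u‖ := by
    nlinarith [norm_le_norm_add_norm_sub' u (V.starProjection u), norm_nonneg u]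
  calc ‖Uᗮ.starProjection (V.starProjection u)‖
      = ‖Uᗮ.starProjection (u - V.starProjection u)‖ := by
        rw [map_sub, starProjection_orthogonal_apply_eq_zero hu, zero_sub, norm_neg]
    _ ≤ ‖u - V.starProjection u‖ := Uᗮ.norm_starProjection_apply_le _
    _ ≤ gap U V * ‖u‖ := hdist
    _ ≤ gap U V * (2 * ‖V.starProjection u‖) := by gcongr
    _ = 2 * gap U V * ‖V.starProjection u‖ := by ring

theorem gap_comparable_dist_general (k : ℕ) :
    ∃ c : ℝ, 1 < c ∧
      ∀ U V : Submodule ℝ E, finrank ℝ U = k → finrank ℝ V = k →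
        (1 / c) * ‖projCLM U - projCLM V‖ ≤ gap U V ∧
          gap U V ≤ c * ‖projCLM U - projCLM V‖ := by
  refine ⟨3, by norm_num, fun U V hU hV => ⟨?_, ?_⟩⟩
  · linarith [norm_projCLM_sub_le_gap_add_gap U V, gap_le_two_mul_gap (hU.trans hV.symm)]
  · linarith [gap_le_norm_projCLM_sub U V, norm_nonneg (projCLM U - projCLM V)]

/-- For every `1 ≤ k ≤ dim E` there is a constant `c > 1` such that for all
`k`-dimensional subspaces `U, V ⊆ E`,
`(1/c) ‖P_U − P_V‖ ≤ δ(U,V) ≤ c ‖P_U − P_V‖`. -/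
theorem gap_comparable_dist (k : ℕ) (hk1 : 1 ≤ k) (hk2 : k ≤ finrank ℝ E) :
    ∃ c : ℝ, 1 < c ∧
      ∀ U V : Submodule ℝ E, finrank ℝ U = k → finrank ℝ V = k →
        (1 / c) * ‖projCLM U - projCLM V‖ ≤ gap U V ∧
          gap U V ≤ c * ‖projCLM U - projCLM V‖ :=
  gap_comparable_dist_general k
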